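/- With the concrete base type interpretation I defined from constructor types, and assuming → is locally confluent: if t ∈ SN and t →* t' with t' ∈ I_B^κ, then t ∈ I_B^κ. -/
import Mathlib


namespace BlanquiRiba

/-! ### Terms -/

inductive Tm (C F : Type) : Type
  | var  : ℕ → Tm C F
  | con  : C → Tm C F
  | fn   : F → Tm C F
  | lam  : ℕ → Tm C F → Tm C F
  | app  : Tm C F → Tm C F → Tm C F
  | pair : Tm C F → Tm C F → Tm C F
  | fst  : Tm C F → Tm C F
  | snd  : Tm C F → Tm C F
  | lett : ℕ → Tm C F → Tm C F → Tm C F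
  | ifte : Tm C F → Tm C F → Tm C F → Tm C F

variable {C F : Type}

/-- Simultaneous substitution (binders shadow the substitution). -/
def subst (σ : ℕ → Tm C F) : Tm C F → Tm C F
  | .var x => σ x
  | .con c => .con c
  | .fn f => .fn f
  | .lam x t => .lam x (subst (Function.update σ x (.var x)) t)
  | .app t u => .app (subst σ t) (subst σ u)
  | .pair t u => .pair (subst σ t) (subst σ u)
  | .fst t => .fst (subst σ t)
  | .snd t => .snd (subst σ t)
  | .lett x t u => .lett x (subst σ t) (subst (Function.update σ x (.var x)) u)
  | .ifte t u v => .ifte (subst σ t) (subst σ u) (subst σ v)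

/-- Substitution of a single variable. -/
def subst1 (x : ℕ) (s : Tm C F) : Tm C F → Tm C F := subst (Function.update Tm.var x s)

/-- Free term variables. -/
def fv : Tm C F → Finset ℕ
  | .var x => {x}
  | .con _ => ∅
  | .fn _ => ∅
  | .lam x t => fv t \ {x}
  | .app t u => fv t ∪ fv u
  | .pair t u => fv t ∪ fv u
  | .fst t => fv t
  | .snd t => fv t
  | .lett x t u => fv t ∪ (fv u \ {x})
  | .ifte t u v => fv t ∪ fv u ∪ fv v

/-- The constructor `true` (for `b = true`) or `false` (for `b = false`). -/
def boolCon (ctt cff : C) (b : Bool) : Tm C F := .con (bif b then ctt else cff)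

/-! ### Head β-reduction -/

inductive HeadBeta (ctt cff : C) : Tm C F → Tm C F → Prop
  | beta (x : ℕ) (u t : Tm C F) : HeadBeta ctt cff (.app (.lam x u) t) (subst1 x t u)
  | lett (x : ℕ) (t u : Tm C F) : HeadBeta ctt cff (.lett x t u) (subst1 x t u)
  | fst (u v : Tm C F) : HeadBeta ctt cff (.fst (.pair u v)) u
  | snd (u v : Tm C F) : HeadBeta ctt cff (.snd (.pair u v)) v
  | ifteT (u v : Tm C F) : HeadBeta ctt cff (.ifte (.con ctt) u v) u
  | ifteF (u v : Tm C F) : HeadBeta ctt cff (.ifte (.con cff) u v) v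

/-! ### Constructor patterns -/

mutual
  inductive IsConApp {C F : Type} : Tm C F → Prop
    | con (c : C) : IsConApp (.con c)
    | app {t u : Tm C F} : IsConApp t → IsPat u → IsConApp (.app t u)
  inductive IsPat {C F : Type} : Tm C F → Prop
    | var (x : ℕ) : IsPat (.var x)
    | conApp {t : Tm C F} : IsConApp t → IsPat t
end

/-- A function symbol applied to constructor patterns. -/
inductive IsFnPatApp {C F : Type} : Tm C F → Prop
  | fn (f : F) : IsFnPatApp (.fn f)
  | app {t u : Tm C F} : IsFnPatApp t → IsPat u → IsFnPatApp (.app t u)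

/-! ### Conditional rewrite rules -/

/-- A conditional rewrite rule `t⃗ = c⃗ ⊃ lhs → rhs`; each condition is a pair of a
term and a boolean (`true` standing for the constructor `true`, etc.). -/
structure Rule (C F : Type) where
  conds : List (Tm C F × Bool)
  lhs : Tm C F
  rhs : Tm C F

/-- Well-formedness of a rule: the left hand-side is a function symbol applied to
constructor patterns, and the free variables of the right hand-side and of the
conditions occur in the left hand-side. -/
def WfRule (r : Rule C F) : Prop :=
  IsFnPatApp r.lhs ∧ fv r.rhs ⊆ fv r.lhs ∧ ∀ p ∈ r.conds, fv p.1 ⊆ fv r.lhs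

/-! ### The reduction relation → = →β ∪ →R -/

mutual
  /-- One step of `→ = →β ∪ →R`: closure by contexts of head-β steps and of
  (substitution instances of) rule applications whose conditions hold. -/
  inductive Red {C F : Type} (ctt cff : C) (R : Set (Rule C F)) : Tm C F → Tm C F → Prop
    | head {t u : Tm C F} : HeadBeta ctt cff t u → Red ctt cff R t u
    | rule {r : Rule C F} (σ : ℕ → Tm C F) : r ∈ R → CondsHold ctt cff R σ r.conds →
        Red ctt cff R (subst σ r.lhs) (subst σ r.rhs)
    | lam {t t' : Tm C F} (x : ℕ) : Red ctt cff R t t' → Red ctt cff R (.lam x t) (.lam x t')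
    | appL {t t' u : Tm C F} : Red ctt cff R t t' → Red ctt cff R (.app t u) (.app t' u)
    | appR {t u u' : Tm C F} : Red ctt cff R u u' → Red ctt cff R (.app t u) (.app t u')
    | pairL {t t' u : Tm C F} : Red ctt cff R t t' → Red ctt cff R (.pair t u) (.pair t' u)
    | pairR {t u u' : Tm C F} : Red ctt cff R u u' → Red ctt cff R (.pair t u) (.pair t u')
    | fst {t t' : Tm C F} : Red ctt cff R t t' → Red ctt cff R (.fst t) (.fst t')
    | snd {t t' : Tm C F} : Red ctt cff R t t' → Red ctt cff R (.snd t) (.snd t')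
    | lettL {t t' u : Tm C F} (x : ℕ) : Red ctt cff R t t' →
        Red ctt cff R (.lett x t u) (.lett x t' u)
    | lettR {t u u' : Tm C F} (x : ℕ) : Red ctt cff R u u' →
        Red ctt cff R (.lett x t u) (.lett x t u')
    | ifteC {t t' u v : Tm C F} : Red ctt cff R t t' →
        Red ctt cff R (.ifte t u v) (.ifte t' u v)
    | ifteL {t u u' v : Tm C F} : Red ctt cff R u u' →
        Red ctt cff R (.ifte t u v) (.ifte t u' v)
    | ifteR {t u v v' : Tm C F} : Red ctt cff R v v' →
        Red ctt cff R (.ifte t u v) (.ifte t u v')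

  /-- Reflexive-transitive closure `→*` of `Red`. -/
  inductive RedStar {C F : Type} (ctt cff : C) (R : Set (Rule C F)) : Tm C F → Tm C F → Prop
    | refl (t : Tm C F) : RedStar ctt cff R t t
    | head {t u v : Tm C F} : Red ctt cff R t u → RedStar ctt cff R u v → RedStar ctt cff R t v

  /-- The conditions `t⃗σ →* c⃗` of a rule hold. -/
  inductive CondsHold {C F : Type} (ctt cff : C) (R : Set (Rule C F)) :
      (ℕ → Tm C F) → List (Tm C F × Bool) → Prop
    | nil (σ : ℕ → Tm C F) : CondsHold ctt cff R σ []
    | cons {σ : ℕ → Tm C F} {p : Tm C F × Bool} {l : List (Tm C F × Bool)} :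
        RedStar ctt cff R (subst σ p.1) (boolCon ctt cff p.2) →
        CondsHold ctt cff R σ l → CondsHold ctt cff R σ (p :: l)
end

/-- Strong normalization of `t` for `→`. -/
def SN (ctt cff : C) (R : Set (Rule C F)) (t : Tm C F) : Prop :=
  Acc (fun a b => Red ctt cff R b a) t

/-- The set of strongly normalizing terms. -/
def SNset (ctt cff : C) (R : Set (Rule C F)) : Set (Tm C F) := {t | SN ctt cff R t}

/-- `t` is a normal form. -/
def IsNormal (ctt cff : C) (R : Set (Rule C F)) (t : Tm C F) : Prop :=
  ∀ u, ¬ Red ctt cff R t u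

/-- Local confluence of `→`. -/
def LocallyConfluent (ctt cff : C) (R : Set (Rule C F)) : Prop :=
  ∀ t u v, Red ctt cff R t u → Red ctt cff R t v →
    ∃ w, RedStar ctt cff R u w ∧ RedStar ctt cff R v w

/-! ### Elimination contexts -/

inductive EFrame (C F : Type) : Type
  | appArg : Tm C F → EFrame C F
  | fstF : EFrame C F
  | sndF : EFrame C F

def plugF : EFrame C F → Tm C F → Tm C F
  | .appArg u, t => .app t u
  | .fstF, t => .fst t
  | .sndF, t => .snd t

/-- Plugging a term in an elimination context (innermost frame first). -/
def plug : List (EFrame C F) → Tm C F → Tm C F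
  | [], t => t
  | f :: E, t => plug E (plugF f t)

/-! ### Saturated sets -/

/-- Saturated sets of terms. -/
structure IsSat (ctt cff : C) (R : Set (Rule C F)) (S : Set (Tm C F)) : Prop where
  subset_sn : ∀ t ∈ S, SN ctt cff R t
  red_closed : ∀ t ∈ S, ∀ t', Red ctt cff R t t' → t' ∈ S
  var_fill : ∀ (E : List (EFrame C F)) (x : ℕ),
    SN ctt cff R (plug E (.var x)) → plug E (.var x) ∈ S
  head_exp : ∀ (E : List (EFrame C F)) (t t' : Tm C F),
    SN ctt cff R t → HeadBeta ctt cff t t' → plug E t' ∈ S → plug E t ∈ S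

/-- Arrow operation on sets of terms. -/
def arrSet (S₁ S₂ : Set (Tm C F)) : Set (Tm C F) := {t | ∀ u ∈ S₁, Tm.app t u ∈ S₂}

/-- Product operation on sets of terms. -/
def prodSet (S₁ S₂ : Set (Tm C F)) : Set (Tm C F) := {t | Tm.fst t ∈ S₁ ∧ Tm.snd t ∈ S₂}

/-- Neutral terms: `f t⃗`, `if`, `fst`, `snd`. -/
inductive IsFnApp {C F : Type} : Tm C F → Prop
  | fn (f : F) : IsFnApp (.fn f)
  | app {t : Tm C F} (u : Tm C F) : IsFnApp t → IsFnApp (.app t u)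

def IsNeutral (t : Tm C F) : Prop :=
  IsFnApp t ∨ (∃ a b c : Tm C F, t = .ifte a b c) ∨ (∃ u, t = .fst u) ∨ (∃ u, t = .snd u)

/-- `S` has the neutral term property. -/
def NeutralTermProperty (ctt cff : C) (R : Set (Rule C F)) (S : Set (Tm C F)) : Prop :=
  ∀ t, IsNeutral t → (∀ u, Red ctt cff R t u → u ∈ S) → t ∈ S

/-! ### Size expressions, valuations, constraints -/

/-- Size expressions of sort `nat` (with nat-sorted variables indexed by `ℕ`). -/
inductive SizeN : Type
  | var : ℕ → SizeN
  | zero : SizeN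
  | one : SizeN
  | add : SizeN → SizeN → SizeN
  | max : SizeN → SizeN → SizeN

/-- Size expressions of sort `bool` (with bool-sorted variables indexed by `ℕ`). -/
inductive SizeB : Type
  | var : ℕ → SizeB
  | tt : SizeB
  | ff : SizeB

/-- A sorted size variable. -/
inductive SVar : Type
  | nv : ℕ → SVar
  | bv : ℕ → SVar

/-- Valuations of the size variables in the interpretation domains
`D_nat = ℕ` and `D_bool = {T,F} = Bool`. -/
structure Val : Type where
  natV : ℕ → ℕ
  boolV : ℕ → Bool

def evalN (μ : Val) : SizeN → ℕ
  | .var n => μ.natV n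
  | .zero => 0
  | .one => 1
  | .add a b => evalN μ a + evalN μ b
  | .max a b => Nat.max (evalN μ a) (evalN μ b)

def evalB (μ : Val) : SizeB → Bool
  | .var n => μ.boolV n
  | .tt => true
  | .ff => false

def updN (μ : Val) (n : ℕ) (k : ℕ) : Val := ⟨Function.update μ.natV n k, μ.boolV⟩
def updB (μ : Val) (n : ℕ) (b : Bool) : Val := ⟨μ.natV, Function.update μ.boolV n b⟩

/-- Free size variables of a nat-sorted size expression. -/
def fvN : SizeN → Set SVar
  | .var n => {SVar.nv n}
  | .zero => ∅
  | .one => ∅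
  | .add a b => fvN a ∪ fvN b
  | .max a b => fvN a ∪ fvN b

def fvB : SizeB → Set SVar
  | .var n => {SVar.bv n}
  | .tt => ∅
  | .ff => ∅

/-- Constraints: first-order formulas over the size algebra. -/
inductive Constr : Type
  | tru : Constr
  | fls : Constr
  | eqN : SizeN → SizeN → Constr
  | ltN : SizeN → SizeN → Constr
  | eqB : SizeB → SizeB → Constr
  | and : Constr → Constr → Constr
  | or : Constr → Constr → Constr
  | imp : Constr → Constr → Constr
  | not : Constr → Constr
  | exN : ℕ → Constr → Constr
  | exB : ℕ → Constr → Constr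
  | allN : ℕ → Constr → Constr
  | allB : ℕ → Constr → Constr

/-- Satisfaction `μ ⊨ P`. -/
def csat (μ : Val) : Constr → Prop
  | .tru => True
  | .fls => False
  | .eqN a b => evalN μ a = evalN μ b
  | .ltN a b => evalN μ a < evalN μ b
  | .eqB a b => evalB μ a = evalB μ b
  | .and P Q => csat μ P ∧ csat μ Q
  | .or P Q => csat μ P ∨ csat μ Q
  | .imp P Q => csat μ P → csat μ Q
  | .not P => ¬ csat μ P
  | .exN n P => ∃ k : ℕ, csat (updN μ n k) P
  | .exB n P => ∃ b : Bool, csat (updB μ n b) P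
  | .allN n P => ∀ k : ℕ, csat (updN μ n k) P
  | .allB n P => ∀ b : Bool, csat (updB μ n b) P

/-- Validity `⊨ P`. -/
def CValid (P : Constr) : Prop := ∀ μ : Val, csat μ P

/-- Free size variables of a constraint. -/
def fvC : Constr → Set SVar
  | .tru => ∅
  | .fls => ∅
  | .eqN a b => fvN a ∪ fvN b
  | .ltN a b => fvN a ∪ fvN b
  | .eqB a b => fvB a ∪ fvB b
  | .and P Q => fvC P ∪ fvC Q
  | .or P Q => fvC P ∪ fvC Q
  | .imp P Q => fvC P ∪ fvC Q
  | .not P => fvC P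
  | .exN n P => fvC P \ {SVar.nv n}
  | .exB n P => fvC P \ {SVar.bv n}
  | .allN n P => fvC P \ {SVar.nv n}
  | .allB n P => fvC P \ {SVar.bv n}

/-- Bound size variables of a constraint. -/
def bvC : Constr → Set SVar
  | .tru => ∅
  | .fls => ∅
  | .eqN _ _ => ∅
  | .ltN _ _ => ∅
  | .eqB _ _ => ∅
  | .and P Q => bvC P ∪ bvC Q
  | .or P Q => bvC P ∪ bvC Q
  | .imp P Q => bvC P ∪ bvC Q
  | .not P => bvC P
  | .exN n P => bvC P ∪ {SVar.nv n}
  | .exB n P => bvC P ∪ {SVar.bv n}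
  | .allN n P => bvC P ∪ {SVar.nv n}
  | .allB n P => bvC P ∪ {SVar.bv n}

/-- Existential quantification over a list of sorted variables. -/
def exsQ : List SVar → Constr → Constr
  | [], P => P
  | .nv n :: l, P => .exN n (exsQ l P)
  | .bv n :: l, P => .exB n (exsQ l P)

/-- Universal quantification over a list of sorted variables. -/
def allsQ : List SVar → Constr → Constr
  | [], P => P
  | .nv n :: l, P => .allN n (allsQ l P)
  | .bv n :: l, P => .allB n (allsQ l P)

/-! ### Types -/

/-- Types over a set `Bn` of type names distinct from `bool`. -/
inductive Ty (Bn : Type) : Type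
  | base : Bn → SizeN → Ty Bn
  | boolT : SizeB → Ty Bn
  | arr : Ty Bn → Ty Bn → Ty Bn
  | prod : Ty Bn → Ty Bn → Ty Bn
  | all : List SVar → Constr → Ty Bn → Ty Bn
  | ex : List SVar → Constr → Ty Bn → Ty Bn

variable {Bn : Type}

/-- Free size variables of a type. -/
def ftvTy : Ty Bn → Set SVar
  | .base _ a => fvN a
  | .boolT a => fvB a
  | .arr T U => ftvTy T ∪ ftvTy U
  | .prod T U => ftvTy T ∪ ftvTy U
  | .all αs P T => (fvC P ∪ ftvTy T) \ {α | α ∈ αs}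
  | .ex αs P T => (fvC P ∪ ftvTy T) \ {α | α ∈ αs}

/-- Bound size variables of a type. -/
def btvTy : Ty Bn → Set SVar
  | .base _ _ => ∅
  | .boolT _ => ∅
  | .arr T U => btvTy T ∪ btvTy U
  | .prod T U => btvTy T ∪ btvTy U
  | .all αs P T => {α | α ∈ αs} ∪ bvC P ∪ btvTy T
  | .ex αs P T => {α | α ∈ αs} ∪ bvC P ∪ btvTy T

/-- The abbreviation `B = ∃α.B^α`. -/
def natEx (B : Bn) : Ty Bn := .ex [SVar.nv 0] .tru (.base B (.var 0))

/-- The abbreviation `bool = ∃α.bool^α`. -/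
def boolEx : Ty Bn := .ex [SVar.bv 0] .tru (.boolT (.var 0))

/-- Basic types. -/
inductive Basic {Bn : Type} : Ty Bn → Prop
  | base (B : Bn) (a : SizeN) : Basic (.base B a)
  | boolT (a : SizeB) : Basic (.boolT a)
  | prod {T U : Ty Bn} : Basic T → Basic U → Basic (.prod T U)

/-- ∃-basic types. -/
inductive ExBasic {Bn : Type} : Ty Bn → Prop
  | basic {T : Ty Bn} : Basic T → ExBasic T
  | ex {αs : List SVar} {P : Constr} {T : Ty Bn} :
      ExBasic T → CValid (exsQ αs P) → ExBasic (.ex αs P T)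

/-! ### Size substitutions -/

/-- A (sort-preserving) size substitution. -/
structure SSub : Type where
  natS : ℕ → SizeN
  boolS : ℕ → SizeB

def substN (φ : SSub) : SizeN → SizeN
  | .var n => φ.natS n
  | .zero => .zero
  | .one => .one
  | .add a b => .add (substN φ a) (substN φ b)
  | .max a b => .max (substN φ a) (substN φ b)

def substB (φ : SSub) : SizeB → SizeB
  | .var n => φ.boolS n
  | .tt => .tt
  | .ff => .ff

/-- Remove a sorted variable from the domain of a size substitution. -/
def rmS (α : SVar) (φ : SSub) : SSub :=
  match α with
  | .nv n => ⟨Function.update φ.natS n (.var n), φ.boolS⟩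
  | .bv n => ⟨φ.natS, Function.update φ.boolS n (.var n)⟩

def rmList (αs : List SVar) (φ : SSub) : SSub := αs.foldr rmS φ

/-- Applying a size substitution to a constraint (binders shadow the substitution). -/
def substC (φ : SSub) : Constr → Constr
  | .tru => .tru
  | .fls => .fls
  | .eqN a b => .eqN (substN φ a) (substN φ b)
  | .ltN a b => .ltN (substN φ a) (substN φ b)
  | .eqB a b => .eqB (substB φ a) (substB φ b)
  | .and P Q => .and (substC φ P) (substC φ Q)
  | .or P Q => .or (substC φ P) (substC φ Q)
  | .imp P Q => .imp (substC φ P) (substC φ Q)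
  | .not P => .not (substC φ P)
  | .exN n P => .exN n (substC (rmS (SVar.nv n) φ) P)
  | .exB n P => .exB n (substC (rmS (SVar.bv n) φ) P)
  | .allN n P => .allN n (substC (rmS (SVar.nv n) φ) P)
  | .allB n P => .allB n (substC (rmS (SVar.bv n) φ) P)

/-- Applying a size substitution to a type (binders shadow the substitution). -/
def substTy (φ : SSub) : Ty Bn → Ty Bn
  | .base B a => .base B (substN φ a)
  | .boolT a => .boolT (substB φ a)
  | .arr T U => .arr (substTy φ T) (substTy φ U)
  | .prod T U => .prod (substTy φ T) (substTy φ U)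
  | .all αs P T => .all αs (substC (rmList αs φ) P) (substTy (rmList αs φ) T)
  | .ex αs P T => .ex αs (substC (rmList αs φ) P) (substTy (rmList αs φ) T)

/-- `φ` maps the sorted variable `β` to itself. -/
def sIdAt (φ : SSub) : SVar → Prop
  | .nv n => φ.natS n = .var n
  | .bv n => φ.boolS n = .var n

/-- `β` does not occur in the image by `φ` of any other variable. -/
def freshInRange (φ : SSub) (β : SVar) : Prop :=
  (∀ n, SVar.nv n ≠ β → β ∉ fvN (φ.natS n)) ∧ (∀ n, SVar.bv n ≠ β → β ∉ fvB (φ.boolS n))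

/-- `φ` is capture-avoiding for the type `T`: it does not move the bound variables of `T`
and no bound variable of `T` occurs in its range. -/
def NoCaptureTy (φ : SSub) (T : Ty Bn) : Prop :=
  ∀ β ∈ btvTy T, sIdAt φ β ∧ freshInRange φ β

/-- `φ` is capture-avoiding for the constraint `P`. -/
def NoCaptureC (φ : SSub) (P : Constr) : Prop :=
  ∀ β ∈ bvC P, sIdAt φ β ∧ freshInRange φ β

/-- `φ` is the identity outside of `αs`. -/
def IdOff (αs : List SVar) (φ : SSub) : Prop :=
  (∀ n, SVar.nv n ∉ αs → φ.natS n = .var n) ∧ (∀ n, SVar.bv n ∉ αs → φ.boolS n = .var n)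

/-- The valuation `φμ` obtained by evaluating the substitution `φ` under `μ`. -/
def compVal (φ : SSub) (μ : Val) : Val :=
  ⟨fun n => evalN μ (φ.natS n), fun n => evalB μ (φ.boolS n)⟩

/-! ### Interpretation of types -/

/-- `ν` agrees with `μ` outside of the sorted variables `αs`. -/
def VAgreeOff (αs : List SVar) (μ ν : Val) : Prop :=
  (∀ n, SVar.nv n ∉ αs → ν.natV n = μ.natV n) ∧
  (∀ n, SVar.bv n ∉ αs → ν.boolV n = μ.boolV n)

/-- The interpretation `I_bool^κ` of the type name `bool` (`κ* = true` for `κ = T`): the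
strongly normalizing terms whose normal form is not `κ*`. -/
def IboolSet (ctt cff : C) (R : Set (Rule C F)) (nf : Tm C F → Tm C F) (κ : Bool) :
    Set (Tm C F) :=
  {t | SN ctt cff R t ∧ nf t ≠ boolCon ctt cff κ}

/-- `⋂ SAT`: the least saturated set. -/
def interSAT (ctt cff : C) (R : Set (Rule C F)) : Set (Tm C F) :=
  ⋂₀ {S | IsSat ctt cff R S}

open Classical in
/-- Interpretation of types by sets of terms, given a base type interpretation `I`
(for the type names other than `bool`) and a normal form function `nf` (for `bool`). -/
noncomputable def TyI (ctt cff : C) (R : Set (Rule C F)) (nf : Tm C F → Tm C F)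
    (I : Bn → ℕ → Set (Tm C F)) : Ty Bn → Val → Set (Tm C F)
  | .base B a, μ => I B (evalN μ a)
  | .boolT a, μ => IboolSet ctt cff R nf (evalB μ a)
  | .arr U V, μ => arrSet (TyI ctt cff R nf I U μ) (TyI ctt cff R nf I V μ)
  | .prod U V, μ => prodSet (TyI ctt cff R nf I U μ) (TyI ctt cff R nf I V μ)
  | .all αs P T, μ =>
      if CValid (exsQ αs P) then
        ⋂ ν ∈ {ν : Val | VAgreeOff αs μ ν ∧ csat ν P}, TyI ctt cff R nf I T ν
      else SNset ctt cff R
  | .ex αs P T, μ =>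
      if CValid (exsQ αs P) then
        ⋃ ν ∈ {ν : Val | VAgreeOff αs μ ν ∧ csat ν P}, TyI ctt cff R nf I T ν
      else interSAT ctt cff R
/-! ### Subtyping constraints -/

def NotExTy : Ty Bn → Prop := fun T => ∀ (αs : List SVar) (Q : Constr) (V : Ty Bn), T ≠ .ex αs Q V
def NotAllTy : Ty Bn → Prop := fun T => ∀ (αs : List SVar) (Q : Constr) (V : Ty Bn), T ≠ .all αs Q V

/-- The subtyping constraint `⟦T ≤ U⟧`. -/
inductive SubC {Bn : Type} : Ty Bn → Ty Bn → Constr → Prop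
  | base (B : Bn) (a b : SizeN) : SubC (.base B a) (.base B b) (.eqN a b)
  | boolT (a b : SizeB) : SubC (.boolT a) (.boolT b) (.eqB a b)
  | arr {T T' U U' : Ty Bn} {P Q : Constr} :
      SubC T' T P → SubC U U' Q → SubC (.arr T U) (.arr T' U') (.and P Q)
  | prod {T T' U U' : Ty Bn} {P Q : Constr} :
      SubC T T' P → SubC U U' Q → SubC (.prod T U) (.prod T' U') (.and P Q)
  | exR {T U : Ty Bn} {αs : List SVar} {Q P : Constr} :
      (∀ α ∈ αs, α ∉ ftvTy T) → NotExTy T → SubC T U P →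
      SubC T (.ex αs Q U) (exsQ αs (.and Q P))
  | exL {T U : Ty Bn} {αs : List SVar} {Q P : Constr} :
      (∀ α ∈ αs, α ∉ ftvTy T) → SubC U T P →
      SubC (.ex αs Q U) T (allsQ αs (.imp Q P))
  | allR {T U : Ty Bn} {αs : List SVar} {Q P : Constr} :
      (∀ α ∈ αs, α ∉ ftvTy T) → SubC T U P →
      SubC T (.all αs Q U) (allsQ αs (.imp Q P))
  | allL {T U : Ty Bn} {αs : List SVar} {Q P : Constr} :
      (∀ α ∈ αs, α ∉ ftvTy T) → NotAllTy T → SubC U T P →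
      SubC (.all αs Q U) T (exsQ αs (.and Q P))
/-! ### Typing (Figure 1) -/

/-- Typing environments: finite mappings from term variables to types. -/
def Env (Bn : Type) : Type := ℕ → Option (Ty Bn)

def envUpd (Γ : Env Bn) (x : ℕ) (T : Ty Bn) : Env Bn := Function.update Γ x (some T)

def envEmpty : Env Bn := fun _ => none

def envSingle (x : ℕ) (T : Ty Bn) : Env Bn := envUpd envEmpty x T

/-- Free size variables of an environment. -/
def fvEnv (Γ : Env Bn) : Set SVar := {α | ∃ x T, Γ x = some T ∧ α ∈ ftvTy T}

/-- A type assignment for the constructor and function symbols. -/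
structure TyAssign (C F Bn : Type) : Type where
  tyC : C → Ty Bn
  tyF : F → Ty Bn

/-- `τ` is a correct type assignment: `τ_true = bool^tt`, `τ_false = bool^ff` and
every `τ_s` is closed. -/
def WfAssign {C F Bn : Type} (ctt cff : C) (τ : TyAssign C F Bn) : Prop :=
  τ.tyC ctt = .boolT .tt ∧ τ.tyC cff = .boolT .ff ∧
    (∀ c, ftvTy (τ.tyC c) = ∅) ∧ (∀ f, ftvTy (τ.tyF f) = ∅)

/-- The typing relation `C;Γ ⊢_τ t : T` of Figure 1. -/
inductive Typing {C F Bn : Type} (ctt cff : C) (τ : TyAssign C F Bn) :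
    Constr → Env Bn → Tm C F → Ty Bn → Prop
  | var {Cc : Constr} {Γ : Env Bn} {x : ℕ} {T : Ty Bn} :
      Γ x = some T → Typing ctt cff τ Cc Γ (.var x) T
  | conSymb {Cc : Constr} {Γ : Env Bn} (c : C) :
      Typing ctt cff τ Cc Γ (.con c) (τ.tyC c)
  | fnSymb {Cc : Constr} {Γ : Env Bn} (f : F) :
      Typing ctt cff τ Cc Γ (.fn f) (τ.tyF f)
  | abs {Cc : Constr} {Γ : Env Bn} {x : ℕ} {T U : Ty Bn} {u : Tm C F} :
      Typing ctt cff τ Cc (envUpd Γ x T) u U → Γ x = none →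
      Typing ctt cff τ Cc Γ (.lam x u) (.arr T U)
  | app {Cc : Constr} {Γ : Env Bn} {t u : Tm C F} {U V : Ty Bn} :
      Typing ctt cff τ Cc Γ t (.arr U V) → Typing ctt cff τ Cc Γ u U →
      Typing ctt cff τ Cc Γ (.app t u) V
  | pair {Cc : Constr} {Γ : Env Bn} {u v : Tm C F} {U V : Ty Bn} :
      Typing ctt cff τ Cc Γ u U → Typing ctt cff τ Cc Γ v V →
      Typing ctt cff τ Cc Γ (.pair u v) (.prod U V)
  | fst {Cc : Constr} {Γ : Env Bn} {t : Tm C F} {U V : Ty Bn} :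
      Typing ctt cff τ Cc Γ t (.prod U V) → Typing ctt cff τ Cc Γ (.fst t) U
  | snd {Cc : Constr} {Γ : Env Bn} {t : Tm C F} {U V : Ty Bn} :
      Typing ctt cff τ Cc Γ t (.prod U V) → Typing ctt cff τ Cc Γ (.snd t) V
  | ifte {Cc : Constr} {Γ : Env Bn} {t u v : Tm C F} {T : Ty Bn} :
      Typing ctt cff τ Cc Γ t boolEx → Typing ctt cff τ Cc Γ u T →
      Typing ctt cff τ Cc Γ v T → ExBasic T →
      Typing ctt cff τ Cc Γ (.ifte t u v) T
  | lett {Cc : Constr} {Γ : Env Bn} {x : ℕ} {t u : Tm C F} {T U : Ty Bn} :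
      Typing ctt cff τ Cc Γ t T → Typing ctt cff τ Cc (envUpd Γ x T) u U → Γ x = none →
      Typing ctt cff τ Cc Γ (.lett x t u) U
  | allI {Cc P : Constr} {Γ : Env Bn} {t : Tm C F} {T : Ty Bn} {αs : List SVar} :
      Typing ctt cff τ (.and Cc P) Γ t T → CValid (.imp Cc (exsQ αs P)) →
      (∀ α ∈ αs, α ∉ fvC Cc ∧ α ∉ fvEnv Γ) →
      Typing ctt cff τ Cc Γ t (.all αs P T)
  | allE {Cc P : Constr} {Γ : Env Bn} {t : Tm C F} {T : Ty Bn} {αs : List SVar} {φ : SSub} :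
      Typing ctt cff τ Cc Γ t (.all αs P T) → IdOff αs φ →
      NoCaptureC φ P → NoCaptureTy φ T →
      CValid (.imp Cc (substC φ P)) →
      Typing ctt cff τ Cc Γ t (substTy φ T)
  | exI {Cc P : Constr} {Γ : Env Bn} {t : Tm C F} {T : Ty Bn} {αs : List SVar} {φ : SSub} :
      Typing ctt cff τ Cc Γ t (substTy φ T) → IdOff αs φ →
      NoCaptureC φ P → NoCaptureTy φ T →
      CValid (.imp Cc (substC φ P)) →
      Typing ctt cff τ Cc Γ t (.ex αs P T)
  | exE {Cc P : Constr} {Γ : Env Bn} {x : ℕ} {t u : Tm C F} {T U : Ty Bn} {αs : List SVar} :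
      Typing ctt cff τ Cc Γ t (.ex αs P T) →
      Typing ctt cff τ (.and Cc P) (envUpd Γ x T) u U →
      CValid (.imp Cc (exsQ αs P)) →
      (∀ α ∈ αs, α ∉ fvC Cc ∧ α ∉ fvEnv Γ ∧ α ∉ ftvTy U) → Γ x = none →
      Typing ctt cff τ Cc Γ (.lett x t u) U
  | sub {Cc P : Constr} {Γ : Env Bn} {t : Tm C F} {T T' : Ty Bn} :
      Typing ctt cff τ Cc Γ t T → SubC T T' P → CValid (.imp Cc P) →
      Typing ctt cff τ Cc Γ t T'
/-! ### Computability -/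

/-- A term is computable of closed type `T` if it belongs to `⟦T⟧^I_μ` for every
valuation `μ`. -/
def Computable (ctt cff : C) (R : Set (Rule C F)) (nf : Tm C F → Tm C F)
    (I : Bn → ℕ → Set (Tm C F)) (T : Ty Bn) (t : Tm C F) : Prop :=
  ∀ μ : Val, t ∈ TyI ctt cff R nf I T μ

/-- `(μ,σ) ⊨ C;Γ`. -/
def ValPair (ctt cff : C) (R : Set (Rule C F)) (nf : Tm C F → Tm C F)
    (I : Bn → ℕ → Set (Tm C F)) (μ : Val) (σ : ℕ → Tm C F)
    (Cc : Constr) (Γ : Env Bn) : Prop :=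
  csat μ Cc ∧ ∀ x T, Γ x = some T → σ x ∈ TyI ctt cff R nf I T μ

/-- A base type interpretation is valid if it consists of saturated sets, every
constructor is computable, and the interpretation of every ∃-basic type has the
neutral term property. -/
def ValidInterp (ctt cff : C) (R : Set (Rule C F)) (τ : TyAssign C F Bn)
    (nf : Tm C F → Tm C F) (I : Bn → ℕ → Set (Tm C F)) : Prop :=
  (∀ B κ, IsSat ctt cff R (I B κ)) ∧
  (∀ c : C, Computable ctt cff R nf I (τ.tyC c) (.con c)) ∧
  (∀ T : Ty Bn, ExBasic T → ∀ μ : Val,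
    NeutralTermProperty ctt cff R (TyI ctt cff R nf I T μ))

/-- `Λ(τ)`: the set of terms typable wrt `τ`. -/
def TypableSet (ctt cff : C) (τ : TyAssign C F Bn) : Set (Tm C F) :=
  {t | ∃ (Cc : Constr) (Γ : Env Bn) (T : Ty Bn), CValid Cc ∧ Typing ctt cff τ Cc Γ t T}
/-! ### Simple types, erasure, simple typing -/

/-- Simple types `S ::= ∃α.B^α | S → S | S × S`. -/
inductive Simple {Bn : Type} : Ty Bn → Prop
  | base (B : Bn) : Simple (natEx B)
  | bool : Simple (boolEx : Ty Bn)
  | arr {S T : Ty Bn} : Simple S → Simple T → Simple (.arr S T)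
  | prod {S T : Ty Bn} : Simple S → Simple T → Simple (.prod S T)

/-- Erasure of a type to a simple type. -/
def eraseTy : Ty Bn → Ty Bn
  | .base B _ => natEx B
  | .boolT _ => boolEx
  | .arr T U => .arr (eraseTy T) (eraseTy U)
  | .prod T U => .prod (eraseTy T) (eraseTy U)
  | .all _ _ T => eraseTy T
  | .ex _ _ T => eraseTy T

/-- The erased type assignment `τ̄`. -/
def eraseAssign {C F Bn : Type} (τ : TyAssign C F Bn) : TyAssign C F Bn :=
  ⟨fun c => eraseTy (τ.tyC c), fun f => eraseTy (τ.tyF f)⟩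

/-- The typing relation restricted to the structural rules (no quantifier rules, no
subsumption), with trivial constraint: used on simple types. -/
inductive STyping {C F Bn : Type} (τ : TyAssign C F Bn) : Env Bn → Tm C F → Ty Bn → Prop
  | var {Γ : Env Bn} {x : ℕ} {T : Ty Bn} : Γ x = some T → STyping τ Γ (.var x) T
  | conSymb {Γ : Env Bn} (c : C) : STyping τ Γ (.con c) (τ.tyC c)
  | fnSymb {Γ : Env Bn} (f : F) : STyping τ Γ (.fn f) (τ.tyF f)
  | abs {Γ : Env Bn} {x : ℕ} {T U : Ty Bn} {u : Tm C F} :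
      STyping τ (envUpd Γ x T) u U → Γ x = none → STyping τ Γ (.lam x u) (.arr T U)
  | app {Γ : Env Bn} {t u : Tm C F} {U V : Ty Bn} :
      STyping τ Γ t (.arr U V) → STyping τ Γ u U → STyping τ Γ (.app t u) V
  | pair {Γ : Env Bn} {u v : Tm C F} {U V : Ty Bn} :
      STyping τ Γ u U → STyping τ Γ v V → STyping τ Γ (.pair u v) (.prod U V)
  | fst {Γ : Env Bn} {t : Tm C F} {U V : Ty Bn} :
      STyping τ Γ t (.prod U V) → STyping τ Γ (.fst t) U
  | snd {Γ : Env Bn} {t : Tm C F} {U V : Ty Bn} :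
      STyping τ Γ t (.prod U V) → STyping τ Γ (.snd t) V
  | ifte {Γ : Env Bn} {t u v : Tm C F} {T : Ty Bn} :
      STyping τ Γ t boolEx → STyping τ Γ u T → STyping τ Γ v T → ExBasic T →
      STyping τ Γ (.ifte t u v) T
  | lett {Γ : Env Bn} {x : ℕ} {t u : Tm C F} {T U : Ty Bn} :
      STyping τ Γ t T → STyping τ (envUpd Γ x T) u U → Γ x = none →
      STyping τ Γ (.lett x t u) U

/-- `t` is simply typable wrt `τ̄`. -/
def SimplyTypable {C F Bn : Type} (τ : TyAssign C F Bn) (t : Tm C F) : Prop :=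
  ∃ (Γ : Env Bn) (T : Ty Bn), (∀ x U, Γ x = some U → Simple U) ∧ Simple T ∧
    STyping (eraseAssign τ) Γ t T

/-! ### Shapes of symbol types -/

/-- Iterated arrow type. -/
def arrows : List (Ty Bn) → Ty Bn → Ty Bn
  | [], U => U
  | T :: l, U => .arr T (arrows l U)

/-- A type name (or `bool`) together with a size variable of the matching sort. -/
inductive AnnB (Bn : Type) : Type
  | nat : Bn → ℕ → AnnB Bn
  | bool : ℕ → AnnB Bn

def AnnB.svar : AnnB Bn → SVar
  | .nat _ n => .nv n
  | .bool n => .bv n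

def AnnB.ty : AnnB Bn → Ty Bn
  | .nat B n => .base B (.var n)
  | .bool n => .boolT (.var n)

/-- The type `T⃗ → ∀α⃗ (P). B⃗^α⃗ → T`. -/
def symbShape (Ts : List (Ty Bn)) (bs : List (AnnB Bn)) (P : Constr) (T : Ty Bn) : Ty Bn :=
  arrows Ts (.all (bs.map AnnB.svar) P (arrows (bs.map AnnB.ty) T))
/-! ### The concrete base type interpretation defined from constructor types -/

/-- A head applied to a list of arguments. -/
def appList (h : Tm C F) : List (Tm C F) → Tm C F
  | [] => h
  | t :: l => appList (.app h t) l

/-- `max(α⃗)` as a size expression. -/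
def maxVars : List ℕ → SizeN
  | [] => .zero
  | [n] => .var n
  | n :: l => .max (.var n) (maxVars l)

/-- The data of a constructor type `C⃗ → ∀α⃗. B⃗^α⃗ → B^a`. -/
structure ConData (Bn : Type) : Type where
  args : List Bn        -- the C⃗
  recNames : List Bn    -- the B⃗
  recVars : List ℕ      -- the α⃗ (nat-sorted variables)
  target : Bn           -- the B

/-- The constructor type `C⃗ → ∀α⃗. B⃗^α⃗ → B^a` with `a = 0` if `α⃗` is empty and
`a = 1 + max(α⃗)` otherwise. -/
def conTy (d : ConData Bn) : Ty Bn :=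
  arrows (d.args.map natEx)
    (.all (d.recVars.map SVar.nv) .tru
      (arrows (List.zipWith (fun B n => Ty.base B (SizeN.var n)) d.recNames d.recVars)
        (.base d.target
          (if d.recVars = [] then .zero else .add .one (maxVars d.recVars)))))

/-- The assumption on constructor types (Section 5), wrt a precedence `leB` on the type
names: every constructor distinct from `true` and `false` has a type of the above shape
with `C⃗` strictly smaller than `B` and `B⃗` equivalent to `B`. -/
structure ConSetup (C F Bn : Type) (ctt cff : C) (τ : TyAssign C F Bn)
    (leB : Bn → Bn → Prop) : Type where
  cdata : C → ConData Bn
  htt : τ.tyC ctt = .boolT .tt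
  hff : τ.tyC cff = .boolT .ff
  hcon : ∀ c : C, c ≠ ctt → c ≠ cff → τ.tyC c = conTy (cdata c)
  hlen : ∀ c : C, (cdata c).recNames.length = (cdata c).recVars.length
  hnodup : ∀ c : C, (cdata c).recVars.Nodup
  hargsLt : ∀ c : C, c ≠ ctt → c ≠ cff →
    ∀ B ∈ (cdata c).args, leB B (cdata c).target ∧ ¬ leB (cdata c).target B
  hrecsEquiv : ∀ c : C, c ≠ ctt → c ≠ cff →
    ∀ B ∈ (cdata c).recNames, leB B (cdata c).target ∧ leB (cdata c).target B

variable {leB : Bn → Bn → Prop} {τ : TyAssign C F Bn}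

/-- `I` satisfies the defining equations of the concrete base type interpretation built
from the constructor types.  (These equations define `I` uniquely, by induction on the
precedence and on `κ`.) -/
def InterpEq (ctt cff : C) (R : Set (Rule C F)) (S : ConSetup C F Bn ctt cff τ leB)
    (I : Bn → ℕ → Set (Tm C F)) : Prop :=
  ∀ (B : Bn) (t : Tm C F),
    (t ∈ I B 0 ↔ SN ctt cff R t ∧
      ∀ c : C, c ≠ ctt → c ≠ cff → (S.cdata c).target = B →
        ∀ ts us : List (Tm C F),
          ts.length = (S.cdata c).args.length →
          us.length = (S.cdata c).recVars.length →
          RedStar ctt cff R t (appList (.con c) (ts ++ us)) →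
          List.Forall₂ (fun ti Bi => ∃ κ, ti ∈ I Bi κ) ts (S.cdata c).args ∧
          (S.cdata c).recVars = []) ∧
    (∀ κ : ℕ, t ∈ I B (κ + 1) ↔ SN ctt cff R t ∧
      ∀ c : C, c ≠ ctt → c ≠ cff → (S.cdata c).target = B →
        ∀ ts us : List (Tm C F),
          ts.length = (S.cdata c).args.length →
          us.length = (S.cdata c).recVars.length →
          RedStar ctt cff R t (appList (.con c) (ts ++ us)) →
          List.Forall₂ (fun ti Bi => ∃ κ', ti ∈ I Bi κ') ts (S.cdata c).args ∧
          (S.cdata c).recVars ≠ [] ∧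
          ∃ κs : List ℕ, κs.length = (S.cdata c).recNames.length ∧ κs ≠ [] ∧
            κ = κs.foldr Nat.max 0 ∧
            List.Forall₂ (fun ui p => ui ∈ I p.1 p.2) us ((S.cdata c).recNames.zip κs))
section Aux
variable {C F : Type} {ctt cff : C} {R : Set (Rule C F)}

lemma starInd {motive : ∀ a b : Tm C F, RedStar ctt cff R a b → Prop}
    (hrefl : ∀ t, motive t t (.refl t))
    (hhead : ∀ {t u v} (h1 : Red ctt cff R t u) (h2 : RedStar ctt cff R u v),
      motive u v h2 → motive t v (.head h1 h2)) :
    ∀ {a b} (h : RedStar ctt cff R a b), motive a b h := by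
  intro a b h
  apply RedStar.rec (motive_1 := fun _ _ _ => True) (motive_2 := motive)
    (motive_3 := fun _ _ _ => True)
  all_goals intros
  all_goals try trivial
  · exact hrefl _
  · exact hhead ‹_› ‹_› ‹_›
lemma RedStar.trans' {a b c : Tm C F} (h1 : RedStar ctt cff R a b)
    (h2 : RedStar ctt cff R b c) : RedStar ctt cff R a c := by
  induction h1 using starInd with
  | hrefl t => exact h2
  | hhead hr hs ih => exact .head hr (ih h2)

lemma Red.star' {a b : Tm C F} (h : Red ctt cff R a b) : RedStar ctt cff R a b :=
  .head h (.refl b)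

lemma SN.red {t u : Tm C F} (h : SN ctt cff R t) (hr : Red ctt cff R t u) :
    SN ctt cff R u := h.inv hr

lemma SN.star {t u : Tm C F} (h : SN ctt cff R t) (hr : RedStar ctt cff R t u) :
    SN ctt cff R u := by
  induction hr using starInd with
  | hrefl t => exact h
  | hhead h1 h2 ih => exact ih (h.inv h1)
lemma newman (hlc : LocallyConfluent ctt cff R) {t : Tm C F} (ht : SN ctt cff R t) :
    ∀ u v, RedStar ctt cff R t u → RedStar ctt cff R t v →
      ∃ w, RedStar ctt cff R u w ∧ RedStar ctt cff R v w := by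
  induction ht with
  | intro t h IH =>
    intro u v hu hv
    cases hu with
    | refl => exact ⟨v, hv, .refl v⟩
    | head hta hau =>
      cases hv with
      | refl => exact ⟨u, .refl u, .head hta hau⟩
      | head htb hbv =>
        rename_i a b
        obtain ⟨c, hac, hbc⟩ := hlc t a b hta htb
        obtain ⟨d, hud, hcd⟩ := IH a hta u c hau hac
        obtain ⟨e, hve, hde⟩ := IH b htb v d hbv (hbc.trans' hcd)
        exact ⟨e, hud.trans' hde, hve⟩

lemma normal_star_eq {t w : Tm C F} (hn : IsNormal ctt cff R t)
    (h : RedStar ctt cff R t w) : w = t := by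
  cases h with
  | refl => rfl
  | head h1 _ => exact absurd h1 (hn _)
lemma appList_append (h : Tm C F) (l1 l2 : List (Tm C F)) :
    appList h (l1 ++ l2) = appList (appList h l1) l2 := by
  induction l1 generalizing h with
  | nil => rfl
  | cons a l ih => simp [appList, ih]

inductive Spine (c : C) : Tm C F → List (Tm C F) → Prop
  | nil : Spine c (.con c) []
  | snoc {t : Tm C F} {l : List (Tm C F)} (u : Tm C F) :
      Spine c t l → Spine c (.app t u) (l ++ [u])

lemma spine_appList (c : C) (l : List (Tm C F)) : Spine c (appList (.con c) l) l := by
  induction l using List.reverseRecOn with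
  | nil => exact .nil
  | append_singleton l u ih =>
    rw [appList_append]
    exact .snoc u ih

lemma spine_eq {c : C} {t : Tm C F} {l : List (Tm C F)} (h : Spine c t l) :
    t = appList (.con c) l := by
  induction h with
  | nil => rfl
  | snoc u h ih => rw [appList_append, ← ih]; rfl

lemma fnApp_subst {p : Tm C F} (h : IsFnPatApp p) (σ : ℕ → Tm C F) :
    IsFnApp (subst σ p) := by
  induction h with
  | fn f => exact .fn f
  | app ht hu ih => exact .app _ ih

lemma spine_not_fnApp {c : C} {t : Tm C F} {l : List (Tm C F)} (h : Spine c t l) :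
    ¬ IsFnApp t := by
  induction h with
  | nil => intro hf; cases hf
  | snoc u h ih => intro hf; cases hf with | app _ hf' => exact ih hf'
lemma red_spine (hR : ∀ r ∈ R, WfRule r) {c : C} {t w : Tm C F} {l : List (Tm C F)}
    (hs : Spine c t l) (hr : Red ctt cff R t w) :
    ∃ l', Spine c w l' ∧ List.Forall₂ (RedStar ctt cff R) l l' := by
  induction hs generalizing w with
  | nil =>
    generalize hgen : (Tm.con c : Tm C F) = t0 at hr
    cases hr
    case head hb => subst hgen; cases hb
    case rule =>
      rename_i r σ hrm hc
      exact absurd (fnApp_subst (hR _ hrm).1 σ) (by rw [← hgen]; intro h; cases h)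
    all_goals cases hgen
  | snoc u hs ih =>
    rename_i t l
    generalize hgen : Tm.app t u = t0 at hr
    cases hr
    case head hb =>
      subst hgen; cases hb; cases hs
    case rule =>
      rename_i r σ hrm hc
      have hfn := fnApp_subst (hR _ hrm).1 σ
      rw [← hgen] at hfn
      cases hfn with | app _ hf' => exact absurd hf' (spine_not_fnApp hs)
    case appL =>
      rename_i p p' q h1
      cases hgen
      obtain ⟨l', hs', hf⟩ := ih h1
      exact ⟨l' ++ [u], .snoc u hs', List.rel_append hf (List.forall₂_cons.mpr ⟨.refl u, .nil⟩)⟩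
    case appR =>
      rename_i p q q' h1
      cases hgen
      refine ⟨l ++ [q'], .snoc q' hs, ?_⟩
      exact List.rel_append (List.forall₂_same.mpr fun x _ => .refl x)
        (List.forall₂_cons.mpr ⟨h1.star', .nil⟩)
    all_goals cases hgen
lemma f2_trans {α : Type*} {Rel : α → α → Prop}
    (htr : ∀ {a b c}, Rel a b → Rel b c → Rel a c) :
    ∀ {l1 l2 l3 : List α}, List.Forall₂ Rel l1 l2 → List.Forall₂ Rel l2 l3 →
      List.Forall₂ Rel l1 l3 := by
  intro l1 l2 l3 h1
  induction h1 generalizing l3 with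
  | nil => intro h2; cases h2; exact .nil
  | cons h ht ih =>
    intro h2
    cases h2 with
    | cons h' ht' => exact .cons (htr h h') (ih ht')

lemma redstar_spine (hR : ∀ r ∈ R, WfRule r) {c : C} {t w : Tm C F} {l : List (Tm C F)}
    (hs : Spine c t l) (hr : RedStar ctt cff R t w) :
    ∃ l', Spine c w l' ∧ List.Forall₂ (RedStar ctt cff R) l l' := by
  induction hr using starInd generalizing l with
  | hrefl t => exact ⟨l, hs, List.forall₂_same.mpr fun x _ => .refl x⟩
  | hhead h1 h2 ih =>
    obtain ⟨l1, hs1, hf1⟩ := red_spine hR hs h1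
    obtain ⟨l2, hs2, hf2⟩ := ih hs1
    exact ⟨l2, hs2, f2_trans (fun h h' => h.trans' h') hf1 hf2⟩

lemma sn_pull {g : Tm C F → Tm C F}
    (hg : ∀ a b, Red ctt cff R a b → Red ctt cff R (g a) (g b)) {a : Tm C F}
    (h : SN ctt cff R (g a)) : SN ctt cff R a := by
  have key : ∀ t, SN ctt cff R t → ∀ a, g a = t → SN ctt cff R a := by
    intro t ht
    induction ht with
    | intro t h IH =>
      intro a heq
      constructor
      intro b hb
      exact IH (g b) (heq ▸ hg a b hb) b rfl
  exact key _ h a rfl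

lemma sn_spine {c : C} {t : Tm C F} {l : List (Tm C F)} (hs : Spine c t l)
    (ht : SN ctt cff R t) : ∀ a ∈ l, SN ctt cff R a := by
  induction hs with
  | nil => simp
  | snoc u hs ih =>
    intro a ha
    have h1 : SN ctt cff R _ := sn_pull (fun _ _ hr => Red.appL hr) ht
    rcases List.mem_append.mp ha with h | h
    · exact ih h1 a h
    · rw [List.mem_singleton.mp h]
      exact sn_pull (fun _ _ hr => Red.appR hr) ht

lemma mem_le_foldr_max : ∀ {l : List ℕ} {a : ℕ}, a ∈ l → a ≤ l.foldr Nat.max 0 := by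
  intro l
  induction l with
  | nil => simp
  | cons b l ih =>
    intro a ha
    rcases List.mem_cons.mp ha with rfl | h
    · exact Nat.le_max_left _ _
    · exact le_trans (ih h) (Nat.le_max_right _ _)

lemma f2_split {α β : Type*} {Rel : α → β → Prop} :
    ∀ {a b : List α} {l : List β}, List.Forall₂ Rel (a ++ b) l →
      List.Forall₂ Rel a (l.take a.length) ∧ List.Forall₂ Rel b (l.drop a.length) := by
  intro a
  induction a with
  | nil => intro b l h; simpa using h
  | cons x a ih =>
    intro b l h
    cases h with
    | cons hx ht =>
      obtain ⟨h1, h2⟩ := ih ht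
      exact ⟨.cons hx h1, h2⟩

lemma f2_lift {α β : Type*} {P : α → Prop} {Rel : α → α → Prop} {Q : α → β → Prop}
    (step : ∀ x y b, P x → Rel x y → Q y b → Q x b) :
    ∀ {xs ys : List α} {bs : List β}, (∀ x ∈ xs, P x) → List.Forall₂ Rel xs ys →
      List.Forall₂ Q ys bs → List.Forall₂ Q xs bs := by
  intro xs ys bs hp h1
  induction h1 generalizing bs with
  | nil => intro h2; cases h2; exact .nil
  | cons h ht ih =>
    intro h2
    cases h2 with
    | cons hq hq' =>
      exact .cons (step _ _ _ (hp _ (by simp)) h hq)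
        (ih (fun x hx => hp x (by simp [hx])) hq')

lemma f2_memR {α β : Type*} {Q : α → β → Prop} :
    ∀ {xs : List α} {bs : List β}, List.Forall₂ Q xs bs →
      List.Forall₂ (fun x b => b ∈ bs ∧ Q x b) xs bs := by
  intro xs bs h
  induction h with
  | nil => exact .nil
  | cons h ht ih =>
    exact .cons ⟨by simp, h⟩ (ih.imp fun _ _ hm => ⟨List.mem_cons_of_mem _ hm.1, hm.2⟩)
lemma interp_expansion {Bn : Type} (hR : ∀ r ∈ R, WfRule r)
    (hlc : LocallyConfluent ctt cff R)
    {leB : Bn → Bn → Prop} (hrefl : Reflexive leB) (htrans : Transitive leB)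
    (hwf : WellFounded (fun a b : Bn => leB a b ∧ ¬ leB b a))
    {τ : TyAssign C F Bn} (S : ConSetup C F Bn ctt cff τ leB)
    {I : Bn → ℕ → Set (Tm C F)} (hI : InterpEq ctt cff R S I) :
    ∀ (B : Bn) (κ : ℕ) (B' : Bn), leB B' B → leB B B' →
      ∀ t t' : Tm C F, SN ctt cff R t → RedStar ctt cff R t t' →
        t' ∈ I B' κ → t ∈ I B' κ := by
  intro B
  refine hwf.induction (C := fun B => ∀ (κ : ℕ) (B' : Bn), leB B' B → leB B B' →
    ∀ t t' : Tm C F, SN ctt cff R t → RedStar ctt cff R t t' →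
      t' ∈ I B' κ → t ∈ I B' κ) B ?_
  clear B
  intro B IHB κ
  induction κ using Nat.strong_induction_on with
  | _ κ IHκ =>
  intro B' hB'B hBB' t t' ht hstar hmem
  -- the common core for the ts (non-recursive arguments) part
  have core : ∀ (c : C), c ≠ ctt → c ≠ cff → (S.cdata c).target = B' →
      ∀ ts us : List (Tm C F),
        RedStar ctt cff R t (appList (.con c) (ts ++ us)) →
        ∀ ts' : List (Tm C F),
        List.Forall₂ (RedStar ctt cff R) ts ts' →
        List.Forall₂ (fun ti Bi => ∃ κ', ti ∈ I Bi κ') ts' (S.cdata c).args →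
        List.Forall₂ (fun ti Bi => ∃ κ', ti ∈ I Bi κ') ts (S.cdata c).args := by
    intro c hc1 hc2 htgt ts us hredc ts' hfts hfa
    have hsnapp : SN ctt cff R (appList (.con c) (ts ++ us)) := ht.star hredc
    have hsn_ts : ∀ x ∈ ts, SN ctt cff R x := fun x hx =>
      sn_spine (spine_appList c (ts ++ us)) hsnapp x (by simp [hx])
    have step : ∀ x y b, SN ctt cff R x → RedStar ctt cff R x y →
        (b ∈ (S.cdata c).args ∧ ∃ κ', y ∈ I b κ') →
        (b ∈ (S.cdata c).args ∧ ∃ κ', x ∈ I b κ') := by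
      rintro x y b hx hxy ⟨hb, κ'', hyI⟩
      have harg := S.hargsLt c hc1 hc2 b hb
      rw [htgt] at harg
      have hlt : leB b B ∧ ¬ leB B b :=
        ⟨htrans harg.1 hB'B, fun h => harg.2 (htrans hB'B h)⟩
      exact ⟨hb, κ'', IHB b hlt κ'' b (hrefl b) (hrefl b) x y hx hxy hyI⟩
    exact (f2_lift step hsn_ts hfts (f2_memR hfa)).imp fun _ _ h => h.2
  cases κ with
  | zero =>
    obtain ⟨ht', hcond⟩ := (hI B' t').1.mp hmem
    refine (hI B' t).1.mpr ⟨ht, ?_⟩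
    intro c hc1 hc2 htgt ts us hlts hlus hredc
    obtain ⟨w, hw1, hw2⟩ := newman hlc ht t' _ hstar hredc
    obtain ⟨l', hspw, hf2⟩ := redstar_spine hR (spine_appList c (ts ++ us)) hw2
    obtain ⟨hfts, hfus⟩ := f2_split hf2
    have hw_eq : w = appList (.con c) (l'.take ts.length ++ l'.drop ts.length) := by
      rw [List.take_append_drop]; exact spine_eq hspw
    have hlen1 : (l'.take ts.length).length = (S.cdata c).args.length := by
      rw [← hfts.length_eq]; exact hlts
    have hlen2 : (l'.drop ts.length).length = (S.cdata c).recVars.length := by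
      rw [← hfus.length_eq]; exact hlus
    obtain ⟨hfa, hnil⟩ := hcond c hc1 hc2 htgt _ _ hlen1 hlen2 (hw_eq ▸ hw1)
    exact ⟨core c hc1 hc2 htgt ts us hredc _ hfts hfa, hnil⟩
  | succ κ =>
    obtain ⟨ht', hcond⟩ := ((hI B' t').2 κ).mp hmem
    refine ((hI B' t).2 κ).mpr ⟨ht, ?_⟩
    intro c hc1 hc2 htgt ts us hlts hlus hredc
    obtain ⟨w, hw1, hw2⟩ := newman hlc ht t' _ hstar hredc
    obtain ⟨l', hspw, hf2⟩ := redstar_spine hR (spine_appList c (ts ++ us)) hw2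
    obtain ⟨hfts, hfus⟩ := f2_split hf2
    have hw_eq : w = appList (.con c) (l'.take ts.length ++ l'.drop ts.length) := by
      rw [List.take_append_drop]; exact spine_eq hspw
    have hlen1 : (l'.take ts.length).length = (S.cdata c).args.length := by
      rw [← hfts.length_eq]; exact hlts
    have hlen2 : (l'.drop ts.length).length = (S.cdata c).recVars.length := by
      rw [← hfus.length_eq]; exact hlus
    obtain ⟨hfa, hne, κs, hκs1, hκs2, hκs3, hfus'⟩ :=
      hcond c hc1 hc2 htgt _ _ hlen1 hlen2 (hw_eq ▸ hw1)
    refine ⟨core c hc1 hc2 htgt ts us hredc _ hfts hfa, hne, κs, hκs1, hκs2, hκs3, ?_⟩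
    -- the us (recursive arguments) part
    have hsnapp : SN ctt cff R (appList (.con c) (ts ++ us)) := ht.star hredc
    have hsn_us : ∀ x ∈ us, SN ctt cff R x := fun x hx =>
      sn_spine (spine_appList c (ts ++ us)) hsnapp x (by simp [hx])
    have step : ∀ x y p, SN ctt cff R x → RedStar ctt cff R x y →
        (p ∈ (S.cdata c).recNames.zip κs ∧ y ∈ I p.1 p.2) →
        (p ∈ (S.cdata c).recNames.zip κs ∧ x ∈ I p.1 p.2) := by
      rintro x y ⟨B1, κ1⟩ hx hxy ⟨hp, hyI⟩
      obtain ⟨hpN, hpκ⟩ := List.of_mem_zip hp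
      have hrec := S.hrecsEquiv c hc1 hc2 B1 hpN
      rw [htgt] at hrec
      have hκlt : κ1 < κ + 1 := Nat.lt_succ_of_le (hκs3 ▸ mem_le_foldr_max hpκ)
      exact ⟨hp, IHκ κ1 hκlt B1 (htrans hrec.1 hB'B) (htrans hBB' hrec.2)
        x y hx hxy hyI⟩
    exact (f2_lift step hsn_us hfus (f2_memR hfus')).imp fun _ _ h => h.2
end Aux

/-- with the concrete base type interpretation `I` defined from the
constructor types, and assuming local confluence: if `t ∈ SN` and `t →* t'` with
`t' ∈ I_B^κ`, then `t ∈ I_B^κ` (for `B` a type name, including `bool`). -/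
theorem concrete_interp_closed_by_expansion
    {C F Bn : Type} (ctt cff : C) (hne : ctt ≠ cff)
    (R : Set (Rule C F)) (hR : ∀ r ∈ R, WfRule r)
    (hlc : LocallyConfluent ctt cff R)
    (nf : Tm C F → Tm C F)
    (hnf : ∀ t, SN ctt cff R t →
      RedStar ctt cff R t (nf t) ∧ IsNormal ctt cff R (nf t))
    (leB : Bn → Bn → Prop) (hrefl : Reflexive leB) (htrans : Transitive leB)
    (hwf : WellFounded (fun a b : Bn => leB a b ∧ ¬ leB b a))
    (τ : TyAssign C F Bn)
    (S : ConSetup C F Bn ctt cff τ leB)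
    (I : Bn → ℕ → Set (Tm C F)) (hI : InterpEq ctt cff R S I) :
    (∀ (B : Bn) (κ : ℕ) (t t' : Tm C F), SN ctt cff R t → RedStar ctt cff R t t' →
      t' ∈ I B κ → t ∈ I B κ) ∧
    (∀ (κ : Bool) (t t' : Tm C F), SN ctt cff R t → RedStar ctt cff R t t' →
      t' ∈ IboolSet ctt cff R nf κ → t ∈ IboolSet ctt cff R nf κ) := by
  constructor
  · intro B κ t t' ht hstar hmem
    exact interp_expansion hR hlc hrefl htrans hwf S hI B κ B (hrefl B) (hrefl B)
      t t' ht hstar hmem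
  · intro κ t t' ht hstar hmem
    obtain ⟨ht', hnf'⟩ := hmem
    refine ⟨ht, ?_⟩
    obtain ⟨hnt1, hnt2⟩ := hnf t ht
    obtain ⟨hnt1', hnt2'⟩ := hnf t' ht'
    obtain ⟨w, hw1, hw2⟩ := newman hlc ht (nf t) (nf t') hnt1 (hstar.trans' hnt1')
    rw [(normal_star_eq hnt2 hw1).symm.trans (normal_star_eq hnt2' hw2)]
    exact hnf'
end BlanquiRiba
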